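/- Let P(x) = x^3 - b x^2 + c x + d with b > 2, d > 0, P(-1) > 0 and P(1) > 0. Then every root of P has modulus greater than 1 (all roots lie outside the closed unit disk). -/

import Mathlib

/-!
Since `P(-1) > 0` and `P → -∞` at `-∞`, `P` has a real root `r < -1`, and `P = (x - r)(x² + p x + q)`.
Evaluating at `±1`, where `x - r` has constant sign, gives `1 ± p + q > 0`, and these together with
`b > 2` force `q > 1`. A real root of the quadratic cannot lie in `[-1, 1]`, because there
`x² + q ≥ (1 + q)|x| > |p x|`; a non-real root `z` has real part `-p/2`, whence `|z|² = q > 1`.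
-/

lemma exists_lt_cubic_neg (a b c d : ℝ) : ∃ x < a, x ^ 3 - b * x ^ 2 + c * x + d < 0 := by
  set M := 1 + |a| + |b| + |c| + |d|
  refine ⟨-M, by linarith [neg_abs_le a, abs_nonneg b, abs_nonneg c, abs_nonneg d], ?_⟩
  have hM : 1 ≤ M := by linarith [abs_nonneg a, abs_nonneg b, abs_nonneg c, abs_nonneg d]
  have hbcd : |b| + |c| + |d| < M := by linarith [abs_nonneg a]
  have hM2 : 0 < M ^ 2 := by positivity
  calc (-M) ^ 3 - b * (-M) ^ 2 + c * -M + d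
      ≤ -M ^ 3 + (|b| + |c| + |d|) * M ^ 2 := by
        nlinarith [mul_le_mul_of_nonneg_right (neg_abs_le b) hM2.le,
          mul_le_mul_of_nonneg_left hM (abs_nonneg c), neg_abs_le c, le_abs_self d,
          mul_le_mul_of_nonneg_left (one_le_pow₀ (n := 2) hM) (abs_nonneg d)]
    _ < -M ^ 3 + M * M ^ 2 := by gcongr
    _ = 0 := by ring

lemma exists_root_lt_of_cubic_pos {a b c d : ℝ} (ha : 0 < a ^ 3 - b * a ^ 2 + c * a + d) :
    ∃ r < a, r ^ 3 - b * r ^ 2 + c * r + d = 0 := by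
  obtain ⟨x, hxa, hx⟩ := exists_lt_cubic_neg a b c d
  have hcont : ContinuousOn (fun x : ℝ => x ^ 3 - b * x ^ 2 + c * x + d) (Set.Icc x a) := by
    fun_prop
  obtain ⟨r, hr, hr0⟩ := intermediate_value_Ioo hxa.le hcont ⟨hx, ha⟩
  exact ⟨r, hr.2, hr0⟩

lemma cubic_eq_mul_of_root {R : Type*} [CommRing R] {b c d r : R}
    (hr : r ^ 3 - b * r ^ 2 + c * r + d = 0) (z : R) :
    z ^ 3 - b * z ^ 2 + c * z + d = (z - r) * (z ^ 2 + (r - b) * z + (r ^ 2 - b * r + c)) := by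
  linear_combination hr

lemma one_lt_abs_of_quadratic_root {p q x : ℝ} (hq : 1 < q) (h1 : 0 < 1 + p + q)
    (hm1 : 0 < 1 - p + q) (hx : x ^ 2 + p * x + q = 0) : 1 < |x| := by
  by_contra! hle
  obtain ⟨hx1, hx2⟩ := abs_le.mp hle
  rcases lt_trichotomy x 0 with hneg | rfl | hpos
  · nlinarith [mul_pos (neg_pos.mpr hneg) hm1]
  · linarith
  · nlinarith [mul_pos hpos h1]

lemma one_lt_norm_of_quadratic_root {p q : ℝ} (hq : 1 < q) (h1 : 0 < 1 + p + q)
    (hm1 : 0 < 1 - p + q) {z : ℂ} (hz : z ^ 2 + p * z + q = 0) : 1 < ‖z‖ := by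
  have hre : z.re ^ 2 - z.im ^ 2 + p * z.re + q = 0 := by
    simpa [sq] using congrArg Complex.re hz
  have him : z.im * (2 * z.re + p) = 0 := by
    have := congrArg Complex.im hz
    simp only [sq, Complex.add_im, Complex.mul_im, Complex.ofReal_re, Complex.ofReal_im,
      Complex.zero_im] at this
    linear_combination this
  rcases mul_eq_zero.mp him with hreal | hvertex
  · have hz' : z = z.re := Complex.ext rfl (by simpa using hreal)
    rw [hz', Complex.norm_real, Real.norm_eq_abs]
    exact one_lt_abs_of_quadratic_root hq h1 hm1 (by simpa [hreal] using hre)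
  · have hnormSq : ‖z‖ ^ 2 = q := by
      rw [Complex.sq_norm, Complex.normSq_apply]
      nlinarith
    nlinarith [norm_nonneg z]

theorem stmt_16_general (b c d : ℝ) (hb : 2 < b)
    (hm1 : 0 < (-1 : ℝ) ^ 3 - b * (-1) ^ 2 + c * (-1) + d)
    (h1 : 0 < (1 : ℝ) ^ 3 - b * 1 ^ 2 + c * 1 + d) :
    ∀ z : ℂ, z ^ 3 - (b : ℂ) * z ^ 2 + (c : ℂ) * z + (d : ℂ) = 0 →
      1 < ‖z‖ := by
  obtain ⟨r, hr1, hr⟩ := exists_root_lt_of_cubic_pos hm1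
  set p := r - b
  set q := r ^ 2 - b * r + c
  have hp1 : 0 < 1 + p + q := by
    rw [cubic_eq_mul_of_root hr] at h1
    nlinarith
  have hpm1 : 0 < 1 - p + q := by
    rw [cubic_eq_mul_of_root hr] at hm1
    nlinarith
  have hq : 1 < q := by linarith
  intro z hz
  have hrC : (r : ℂ) ^ 3 - b * r ^ 2 + c * r + d = 0 := by exact_mod_cast hr
  rw [cubic_eq_mul_of_root hrC] at hz
  rcases mul_eq_zero.mp hz with hzr | hzq
  · rw [sub_eq_zero.mp hzr, Complex.norm_real, Real.norm_eq_abs, abs_of_neg (by linarith)]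
    linarith
  · exact one_lt_norm_of_quadratic_root hq hp1 hpm1 (by push_cast [p, q]; linear_combination hzq)

theorem stmt_16 (b c d : ℝ) (hb : 2 < b) (hd : 0 < d)
    (hm1 : 0 < (-1 : ℝ) ^ 3 - b * (-1) ^ 2 + c * (-1) + d)
    (h1 : 0 < (1 : ℝ) ^ 3 - b * 1 ^ 2 + c * 1 + d) :
    ∀ z : ℂ, z ^ 3 - (b : ℂ) * z ^ 2 + (c : ℂ) * z + (d : ℂ) = 0 →
      1 < ‖z‖ :=
  stmt_16_general b c d hb hm1 h1
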